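/- For n ≥ 2 players, there is no anonymous age-based acknowledgment-based protocol f that is in equilibrium and for which the expected latency of each player using f (when all players use f) is finite. -/

import Mathlib

open scoped ENNReal

namespace Contention

/-- An acknowledgment-based protocol: maps a player's personal transmission history
(the list of her own past transmission indicators, oldest slot first) to the
probability of transmitting in the next slot. -/
abbrev Protocol : Type := List Bool → ℝ

/-- A protocol is valid if it always prescribes a probability in `[0,1]`. -/
def ValidProtocol (f : Protocol) : Prop := ∀ h : List Bool, 0 ≤ f h ∧ f h ≤ 1

/-- A joint transmission history: the list of transmission vectors, oldest slot first. -/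
abbrev Hist (n : ℕ) : Type := List (Fin n → Bool)

/-- The personal transmission history of player `i` extracted from a joint history. -/
def personal {n : ℕ} (h : Hist n) (i : Fin n) : List Bool := h.map fun v => v i

/-- Player `i` transmits alone (hence successfully) in the slot with transmission vector `v`. -/
def alone {n : ℕ} (v : Fin n → Bool) (i : Fin n) : Prop :=
  v i = true ∧ ∀ j : Fin n, j ≠ i → v j = false

instance {n : ℕ} (v : Fin n → Bool) (i : Fin n) : Decidable (alone v i) := by
  unfold alone; infer_instance

/-- Player `i` is still pending after joint history `h` (she never transmitted alone). -/
def pending {n : ℕ} (h : Hist n) (i : Fin n) : Prop := ∀ v ∈ h, ¬ alone v i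

instance {n : ℕ} (h : Hist n) (i : Fin n) : Decidable (pending h i) := by
  unfold pending; infer_instance

/-- Probability that the next slot has transmission vector `v`, given joint history `h`:
each pending player transmits independently with the probability her protocol assigns to
her personal history, and players that already succeeded stay quiet. -/
noncomputable def stepProb {n : ℕ} (F : Fin n → Protocol) (h : Hist n) (v : Fin n → Bool) : ℝ :=
  ∏ i : Fin n,
    if pending h i then
      (if v i = true then F i (personal h i) else 1 - F i (personal h i))
    else
      (if v i = true then 0 else 1)

/-- Probability that, starting after joint history `h`, the next `e.length` slots produce
exactly the extension `e`. -/
noncomputable def contProb {n : ℕ} (F : Fin n → Protocol) (h e : Hist n) : ℝ :=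
  ∏ t ∈ Finset.range e.length, stepProb F (h ++ e.take t) (e.getD t fun _ => false)

/-- Probability that the first `h.length` slots produce exactly the joint history `h`. -/
noncomputable def histProb {n : ℕ} (F : Fin n → Protocol) (h : Hist n) : ℝ := contProb F [] h

/-- Conditional probability, given joint history `h`, that player `i` is still pending
after `s` further slots. -/
noncomputable def condPendProb {n : ℕ} (F : Fin n → Protocol) (h : Hist n) (i : Fin n)
    (s : ℕ) : ℝ :=
  ∑ e : Fin s → Fin n → Bool,
    if pending (h ++ List.ofFn e) i then contProb F h (List.ofFn e) else 0

/-- Conditional expected latency `E[Tᵢ | h]` of player `i` given joint history `h`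
(`Tᵢ` is the first slot in which `i` transmits alone), computed via
`E[Tᵢ | h] = ∑_{s ≥ 0} Pr(Tᵢ > s | h)`; for `s ≤ h.length` the event `Tᵢ > s` is
determined by `h`, and for larger `s` its probability is `condPendProb`. -/
noncomputable def condLatency {n : ℕ} (F : Fin n → Protocol) (h : Hist n) (i : Fin n) : ℝ≥0∞ :=
  ∑' s : ℕ,
    if s ≤ h.length then (if pending (h.take s) i then 1 else 0)
    else ENNReal.ofReal (condPendProb F h i (s - h.length))

/-- Conditional expected number of further slots until player `i` succeeds, given joint
history `h` (the slot of the successful transmission itself is counted). -/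
noncomputable def condRemaining {n : ℕ} (F : Fin n → Protocol) (h : Hist n) (i : Fin n) : ℝ≥0∞ :=
  ∑' s : ℕ, ENNReal.ofReal (condPendProb F h i s)

/-- A profile of protocols is in equilibrium if after no joint history (arising with
positive probability) can a player strictly decrease her conditional expected latency
by unilaterally switching to another (valid) protocol. -/
def IsEquilibrium {n : ℕ} (F : Fin n → Protocol) : Prop :=
  ∀ i : Fin n, ∀ h : Hist n, 0 < histProb F h →
    ∀ g : Protocol, ValidProtocol g →
      condLatency F h i ≤ condLatency (Function.update F i g) h i

end Contention

namespace Contention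

/-- An age-based protocol: the transmission probability in slot `t` (that is, after a
personal history of length `t − 1`) is `p t`, depending only on the time `t ≥ 1`. -/
def ageProtocol (p : ℕ → ℝ) : Protocol := fun h => p (h.length + 1)

end Contention

namespace Contention

/-!
Suppose all players use the age-based probabilities `p` in equilibrium with finite latency. Then
every `p t` is positive (otherwise transmitting into a silent slot succeeds at once), infinitely
many `p t` are below `1` (otherwise everybody collides forever), and a player left alone transmits
at once. Hence states with exactly two pending players `x`, `y` are reached. Call such a state
critical if the next transmission probability `q` is below `1`, let `X` be its value for `x` (the
expected number of remaining slots) and `C` the value after a silent slot. In a critical state `x`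
must be indifferent between transmitting and staying quiet, which gives `X = 1 + q C` and
`(2q - 1) C = q`, i.e. `X = 1 + C² / (2C - 1)`. The next probability is then `1`, so the pair
collides once more and `C ≥ 1 + L`, where `L` is the infimum of the values of critical states; hence
`L ≥ 1 + (1 + L)² / (2L + 1)`, which forces `L > 3`. But staying quiet for two slots and then
transmitting shows `X ≤ 3`.
-/

open Finset

lemma sum_powerset_singleton {α M : Type*} [DecidableEq α] [AddCommMonoid M] (a : α)
    (f : Finset α → M) : ∑ s ∈ ({a} : Finset α).powerset, f s = f ∅ + f {a} := by
  rw [← insert_empty, sum_powerset_insert (notMem_empty a), powerset_empty, sum_singleton,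
    sum_singleton]

variable {n : ℕ}

def pendingSet (h : Hist n) : Finset (Fin n) := univ.filter (pending h ·)

@[simp] lemma mem_pendingSet {h : Hist n} {j : Fin n} : j ∈ pendingSet h ↔ pending h j := by
  simp [pendingSet]

lemma pendingSet_nil : pendingSet ([] : Hist n) = univ := by
  ext; simp [pending]

lemma pendingSet_append_singleton (h : Hist n) (v : Fin n → Bool) :
    pendingSet (h ++ [v]) = (pendingSet h).filter (¬ alone v ·) := by
  ext; simp [pending, or_imp, forall_and]

def transmit (s : Finset (Fin n)) : Fin n → Bool := fun j => decide (j ∈ s)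

lemma transmit_injective : Function.Injective (transmit : Finset (Fin n) → Fin n → Bool) := by
  intro s s' hs
  ext j
  simpa [transmit] using congrFun hs j

lemma alone_transmit {s : Finset (Fin n)} {j : Fin n} : alone (transmit s) j ↔ s = {j} := by
  simp only [alone, transmit, decide_eq_true_eq, decide_eq_false_iff_not,
    eq_singleton_iff_unique_mem]
  exact ⟨fun ⟨hj, hs⟩ => ⟨hj, fun i hi => by_contra fun hij => hs i hij hi⟩,
    fun ⟨hj, hs⟩ => ⟨hj, fun i hij hi => hij (hs i hi)⟩⟩

lemma pendingSet_append_transmit_of_card_ne_one (h : Hist n) {s : Finset (Fin n)}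
    (hs : s.card ≠ 1) : pendingSet (h ++ [transmit s]) = pendingSet h := by
  rw [pendingSet_append_singleton, filter_true_of_mem]
  rintro j - hj
  exact hs (by rw [alone_transmit.1 hj, card_singleton])

lemma pendingSet_append_transmit_singleton (h : Hist n) (j : Fin n) :
    pendingSet (h ++ [transmit {j}]) = (pendingSet h).erase j := by
  ext i
  simp [pendingSet_append_singleton, alone_transmit, and_comm, eq_comm]

lemma pendingSet_append_transmit_empty (h : Hist n) :
    pendingSet (h ++ [transmit ∅]) = pendingSet h :=
  pendingSet_append_transmit_of_card_ne_one h (by simp)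

lemma pendingSet_append_transmit_pair (h : Hist n) {x y : Fin n} (hxy : x ≠ y) :
    pendingSet (h ++ [transmit {x, y}]) = pendingSet h :=
  pendingSet_append_transmit_of_card_ne_one h (by simp [card_pair hxy])

lemma pendingSet_append_transmit_of_eq_pair {h : Hist n} {x y : Fin n} (hxy : x ≠ y)
    (hS : pendingSet h = {x, y}) : pendingSet (h ++ [transmit {y}]) = {x} := by
  rw [pendingSet_append_transmit_singleton, hS, erase_insert_of_ne hxy, erase_singleton,
    insert_empty]

section Probability

variable {F : Fin n → Protocol} {h : Hist n} {i : Fin n}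

lemma stepProb_nonneg (hF : ∀ j, ValidProtocol (F j)) (h : Hist n) (v : Fin n → Bool) :
    0 ≤ stepProb F h v :=
  prod_nonneg fun j _ => by
    have := hF j (personal h j)
    split_ifs <;> linarith

lemma stepProb_eq_zero_of_not_pending {v : Fin n → Bool} {j : Fin n} (hj : j ∉ pendingSet h)
    (hv : v j = true) : stepProb F h v = 0 :=
  prod_eq_zero (mem_univ j) (by simp_all)

lemma stepProb_transmit {s : Finset (Fin n)} (hs : s ⊆ pendingSet h) :
    stepProb F h (transmit s) = ∏ j ∈ pendingSet h,
      if j ∈ s then F j (personal h j) else 1 - F j (personal h j) := by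
  rw [pendingSet, prod_filter]
  refine prod_congr rfl fun j _ => ?_
  by_cases hj : pending h j
  · simp [hj, transmit]
  · have : j ∉ s := fun hjs => hj (mem_pendingSet.1 (hs hjs))
    simp [hj, this, transmit]

lemma contProb_nonneg (hF : ∀ j, ValidProtocol (F j)) (h e : Hist n) : 0 ≤ contProb F h e :=
  prod_nonneg fun _ _ => stepProb_nonneg hF _ _

lemma contProb_cons (F : Fin n → Protocol) (h : Hist n) (v : Fin n → Bool) (e : Hist n) :
    contProb F h (v :: e) = stepProb F h v * contProb F (h ++ [v]) e := by
  rw [contProb, contProb, List.length_cons, prod_range_succ', mul_comm]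
  simp only [List.take_succ_cons, List.getD_cons_succ, ← List.append_cons, List.take_zero,
    List.append_nil, List.getD_cons_zero]

lemma histProb_append_singleton (F : Fin n → Protocol) (h : Hist n) (v : Fin n → Bool) :
    histProb F (h ++ [v]) = histProb F h * stepProb F h v := by
  simp only [histProb, contProb, List.length_append, List.length_singleton, prod_range_succ,
    List.nil_append]
  congr 1
  · refine prod_congr rfl fun t ht => ?_
    have ht : t < h.length := mem_range.1 ht
    rw [List.take_append_of_le_length ht.le, List.getD_append _ _ _ _ ht]
  · simp

lemma histProb_append_transmit_pos (hpos : 0 < histProb F h) {s : Finset (Fin n)}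
    (hs : s ⊆ pendingSet h) (hin : ∀ j ∈ s, 0 < F j (personal h j))
    (hout : ∀ j ∈ pendingSet h, j ∉ s → F j (personal h j) < 1) :
    0 < histProb F (h ++ [transmit s]) := by
  rw [histProb_append_singleton, stepProb_transmit hs]
  refine mul_pos hpos (prod_pos fun j hj => ?_)
  split_ifs with hjs
  · exact hin j hjs
  · exact sub_pos.2 (hout j hj hjs)

lemma condPendProb_zero (F : Fin n → Protocol) (h : Hist n) (i : Fin n) :
    condPendProb F h i 0 = if pending h i then 1 else 0 := by
  simp [condPendProb, contProb]

lemma condPendProb_succ (F : Fin n → Protocol) (h : Hist n) (i : Fin n) (s : ℕ) :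
    condPendProb F h i (s + 1) =
      ∑ v : Fin n → Bool, stepProb F h v * condPendProb F (h ++ [v]) i s := by
  rw [condPendProb, ← (Fin.consEquiv fun _ => Fin n → Bool).sum_comp, Fintype.sum_prod_type]
  refine sum_congr rfl fun v _ => ?_
  rw [condPendProb, mul_sum]
  refine sum_congr rfl fun e _ => ?_
  simp only [Fin.consEquiv, Equiv.coe_fn_mk, List.ofFn_succ, Fin.cons_zero, Fin.cons_succ,
    ← List.append_cons, contProb_cons, mul_ite, mul_zero]

lemma condPendProb_nonneg (hF : ∀ j, ValidProtocol (F j)) (h : Hist n) (i : Fin n) (s : ℕ) :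
    0 ≤ condPendProb F h i s :=
  sum_nonneg fun _ _ => by
    split_ifs
    exacts [contProb_nonneg hF _ _, le_rfl]

end Probability

section Value

variable {F : Fin n → Protocol} {h : Hist n} {i : Fin n}

lemma condRemaining_eq (hF : ∀ j, ValidProtocol (F j)) (h : Hist n) (i : Fin n) :
    condRemaining F h i = (if pending h i then 1 else 0) +
      ∑ v : Fin n → Bool, ENNReal.ofReal (stepProb F h v) * condRemaining F (h ++ [v]) i := by
  rw [condRemaining, tsum_eq_zero_add' ENNReal.summable, condPendProb_zero]
  congr 1
  · split_ifs <;> simp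
  calc ∑' s, ENNReal.ofReal (condPendProb F h i (s + 1))
      = ∑' s, ∑ v : Fin n → Bool, ENNReal.ofReal (stepProb F h v) *
          ENNReal.ofReal (condPendProb F (h ++ [v]) i s) := by
        refine tsum_congr fun s => ?_
        rw [condPendProb_succ, ENNReal.ofReal_sum_of_nonneg fun v _ =>
          mul_nonneg (stepProb_nonneg hF h v) (condPendProb_nonneg hF _ i s)]
        exact sum_congr rfl fun v _ => ENNReal.ofReal_mul (stepProb_nonneg hF h v)
    _ = _ := by
        rw [Summable.tsum_finsetSum fun _ _ => ENNReal.summable]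
        simp only [condRemaining, ENNReal.tsum_mul_left]

lemma condRemaining_eq_sum_powerset (hF : ∀ j, ValidProtocol (F j)) (h : Hist n) (i : Fin n) :
    condRemaining F h i = (if pending h i then 1 else 0) +
      ∑ s ∈ (pendingSet h).powerset, ENNReal.ofReal (∏ j ∈ pendingSet h,
        if j ∈ s then F j (personal h j) else 1 - F j (personal h j)) *
          condRemaining F (h ++ [transmit s]) i := by
  rw [condRemaining_eq hF]
  congr 1
  calc _ = ∑ v ∈ (pendingSet h).powerset.image transmit,
        ENNReal.ofReal (stepProb F h v) * condRemaining F (h ++ [v]) i := by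
        refine (sum_subset (subset_univ _) fun v _ hv => ?_).symm
        obtain ⟨j, hj, hvj⟩ : ∃ j ∉ pendingSet h, v j = true := by
          by_contra! hsupp
          refine hv (mem_image.2 ⟨univ.filter (v · = true), ?_, funext fun j => ?_⟩)
          · exact mem_powerset.2 fun j hj => by_contra fun hj' => by simp_all
          · simp [transmit]
        simp [stepProb_eq_zero_of_not_pending hj hvj]
    _ = _ := by
        rw [sum_image transmit_injective.injOn]
        exact sum_congr rfl fun s hs => by rw [stepProb_transmit (mem_powerset.1 hs)]

lemma condRemaining_eq_of_deterministic (hF : ∀ j, ValidProtocol (F j)) {s₀ : Finset (Fin n)}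
    (hs₀ : s₀ ⊆ pendingSet h)
    (hdet : ∀ j ∈ pendingSet h, F j (personal h j) = if j ∈ s₀ then 1 else 0) :
    condRemaining F h i =
      (if pending h i then 1 else 0) + condRemaining F (h ++ [transmit s₀]) i := by
  rw [condRemaining_eq_sum_powerset hF, sum_eq_single_of_mem s₀ (mem_powerset.2 hs₀),
    prod_eq_one fun j hj => by rw [hdet j hj]; split_ifs <;> simp, ENNReal.ofReal_one, one_mul]
  intro s hs hne
  obtain ⟨j, hj, hjs⟩ : ∃ j ∈ pendingSet h, ¬ (j ∈ s ↔ j ∈ s₀) := by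
    by_contra! hall
    exact hne (ext fun j => ⟨fun hj => (hall j (mem_powerset.1 hs hj)).1 hj,
      fun hj => (hall j (hs₀ hj)).2 hj⟩)
  rw [prod_eq_zero hj (by rw [hdet j hj]; by_cases j ∈ s <;> simp_all), ENNReal.ofReal_zero,
    zero_mul]

lemma condRemaining_eq_zero_of_not_pending (F : Fin n → Protocol) (hi : ¬ pending h i) :
    condRemaining F h i = 0 := by
  refine ENNReal.tsum_eq_zero.2 fun s => ?_
  rw [condPendProb, sum_eq_zero fun e _ => if_neg fun he => hi fun v hv =>
    he v (List.mem_append_left _ hv), ENNReal.ofReal_zero]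

lemma condRemaining_append_transmit_singleton_self (F : Fin n → Protocol) (h : Hist n)
    (i : Fin n) : condRemaining F (h ++ [transmit {i}]) i = 0 :=
  condRemaining_eq_zero_of_not_pending F (by
    simp [← mem_pendingSet, pendingSet_append_transmit_singleton])

lemma one_le_condRemaining (F : Fin n → Protocol) (hi : pending h i) :
    1 ≤ condRemaining F h i := by
  simpa [condRemaining, condPendProb_zero, hi] using ENNReal.le_tsum (f := fun s =>
    ENNReal.ofReal (condPendProb F h i s)) 0

lemma condLatency_eq (F : Fin n → Protocol) (h : Hist n) (i : Fin n) :
    condLatency F h i = (∑ s ∈ range h.length, if pending (h.take s) i then 1 else 0) +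
      condRemaining F h i := by
  rw [condLatency, ← ENNReal.summable.sum_add_tsum_nat_add' (k := h.length)]
  congr 1
  · exact sum_congr rfl fun s hs => if_pos (mem_range.1 hs).le
  · refine tsum_congr fun s => ?_
    rcases Nat.eq_zero_or_pos s with rfl | hs
    · simp only [condPendProb_zero]
      split_ifs <;> simp_all
    · rw [if_neg (by omega), Nat.add_sub_cancel]

lemma condRemaining_nil (F : Fin n → Protocol) (i : Fin n) :
    condRemaining F [] i = condLatency F [] i := by
  simp [condLatency_eq]

lemma IsEquilibrium.condRemaining_le (heq : IsEquilibrium F) (hpos : 0 < histProb F h)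
    {g : Protocol} (hg : ValidProtocol g) :
    condRemaining F h i ≤ condRemaining (Function.update F i g) h i := by
  have := heq i h hpos g hg
  rwa [condLatency_eq, condLatency_eq, ENNReal.add_le_add_iff_left] at this
  exact ENNReal.sum_ne_top.2 fun s _ => by split_ifs <;> simp

lemma histProb_mul_condPendProb_le (hF : ∀ j, ValidProtocol (F j)) (h : Hist n) (i : Fin n)
    (s : ℕ) : histProb F h * condPendProb F h i s ≤ condPendProb F [] i (h.length + s) := by
  induction h using List.reverseRecOn generalizing s with
  | nil => simp [histProb, contProb]
  | append_singleton h v ih =>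
    have hstep : stepProb F h v * condPendProb F (h ++ [v]) i s ≤ condPendProb F h i (s + 1) := by
      rw [condPendProb_succ]
      exact single_le_sum (f := fun v => stepProb F h v * condPendProb F (h ++ [v]) i s)
        (fun v _ => mul_nonneg (stepProb_nonneg hF h v) (condPendProb_nonneg hF _ i s))
        (mem_univ v)
    calc histProb F (h ++ [v]) * condPendProb F (h ++ [v]) i s
        = histProb F h * (stepProb F h v * condPendProb F (h ++ [v]) i s) := by
          rw [histProb_append_singleton, mul_assoc]
      _ ≤ histProb F h * condPendProb F h i (s + 1) :=
          mul_le_mul_of_nonneg_left hstep (contProb_nonneg hF _ _)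
      _ ≤ condPendProb F [] i ((h ++ [v]).length + s) := by
          simpa [add_assoc, add_comm 1 s] using ih (s + 1)

lemma condRemaining_lt_top (hF : ∀ j, ValidProtocol (F j)) (hpos : 0 < histProb F h)
    (hfin : condLatency F [] i < ⊤) : condRemaining F h i < ⊤ := by
  have hle : ENNReal.ofReal (histProb F h) * condRemaining F h i ≤ condRemaining F [] i := by
    rw [condRemaining, ← ENNReal.tsum_mul_left]
    calc ∑' s, ENNReal.ofReal (histProb F h) * ENNReal.ofReal (condPendProb F h i s)
        ≤ ∑' s, ENNReal.ofReal (condPendProb F [] i (h.length + s)) :=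
          ENNReal.tsum_le_tsum fun s => by
            rw [← ENNReal.ofReal_mul hpos.le]
            exact ENNReal.ofReal_le_ofReal (histProb_mul_condPendProb_le hF h i s)
      _ ≤ condRemaining F [] i :=
          ENNReal.tsum_comp_le_tsum_of_injective (add_right_injective _) _
  rw [condRemaining_nil] at hle
  exact ENNReal.lt_top_of_mul_ne_top_right (ne_top_of_le_ne_top hfin.ne hle)
    (by simpa using hpos)

end Value

section AgeProfile

abbrev ageProfile (P : Fin n → ℕ → ℝ) : Fin n → Protocol := fun j => ageProtocol (P j)

variable {P : Fin n → ℕ → ℝ} {h : Hist n}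

@[simp] lemma ageProtocol_personal (p : ℕ → ℝ) (h : Hist n) (j : Fin n) :
    ageProtocol p (personal h j) = p (h.length + 1) := by
  simp [ageProtocol, personal]

lemma validProtocol_ageProtocol_iff {p : ℕ → ℝ} :
    ValidProtocol (ageProtocol p) ↔ ∀ t, 1 ≤ t → 0 ≤ p t ∧ p t ≤ 1 := by
  refine ⟨fun hp t ht => ?_, fun hp l => hp _ (Nat.le_add_left 1 _)⟩
  obtain ⟨t, rfl⟩ := Nat.exists_eq_add_of_le' ht
  simpa [ageProtocol] using hp (List.replicate t false)

lemma ValidProtocol.ageProtocol_update {p : ℕ → ℝ} (hp : ValidProtocol (ageProtocol p)) (t : ℕ)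
    {a : ℝ} (ha₀ : 0 ≤ a) (ha₁ : a ≤ 1) : ValidProtocol (ageProtocol (Function.update p t a)) := by
  intro l
  by_cases hl : l.length + 1 = t
  · simp [ageProtocol, hl, ha₀, ha₁]
  · simpa [ageProtocol, hl] using hp l

lemma validProtocol_ageProfile_update {p p' : ℕ → ℝ} (hp : ValidProtocol (ageProtocol p))
    (hp' : ValidProtocol (ageProtocol p')) (x j : Fin n) :
    ValidProtocol (ageProtocol (Function.update (fun _ => p) x p' j)) := by
  by_cases hj : j = x <;> simp [hj, hp, hp']

lemma update_ageProfile (P : Fin n → ℕ → ℝ) (x : Fin n) (p : ℕ → ℝ) :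
    Function.update (ageProfile P) x (ageProtocol p) = ageProfile (Function.update P x p) :=
  funext fun j => (Function.apply_update (fun _ => ageProtocol) P x p j).symm

lemma IsEquilibrium.condRemaining_le_update (heq : IsEquilibrium (ageProfile P))
    (hpos : 0 < histProb (ageProfile P) h) {p' : ℕ → ℝ} (hp' : ValidProtocol (ageProtocol p'))
    (i : Fin n) :
    condRemaining (ageProfile P) h i ≤ condRemaining (ageProfile (Function.update P i p')) h i := by
  rw [← update_ageProfile]
  exact heq.condRemaining_le hpos hp'

lemma condPendProb_ageProfile_congr {P' : Fin n → ℕ → ℝ} {h' : Hist n}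
    (hlen : h.length = h'.length) (hS : pendingSet h = pendingSet h')
    (hP : ∀ j t, h.length < t → P j t = P' j t) (i : Fin n) (s : ℕ) :
    condPendProb (ageProfile P) h i s = condPendProb (ageProfile P') h' i s := by
  induction s generalizing h h' with
  | zero => simp only [condPendProb_zero, ← mem_pendingSet, hS]
  | succ s ih =>
    simp only [condPendProb_succ]
    refine sum_congr rfl fun v _ => ?_
    congr 1
    · simp only [stepProb, ageProtocol_personal, ← mem_pendingSet, hS, ← hlen,
        hP _ (h.length + 1) (Nat.lt_succ_self _)]
    · refine ih (by simp [hlen]) (by rw [pendingSet_append_singleton, hS,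
        pendingSet_append_singleton]) fun j t ht => hP j t ?_
      simp at ht
      omega

lemma condRemaining_ageProfile_congr {P' : Fin n → ℕ → ℝ} {h' : Hist n}
    (hlen : h.length = h'.length) (hS : pendingSet h = pendingSet h')
    (hP : ∀ j t, h.length < t → P j t = P' j t) (i : Fin n) :
    condRemaining (ageProfile P) h i = condRemaining (ageProfile P') h' i :=
  tsum_congr fun s => by rw [condPendProb_ageProfile_congr hlen hS hP i s]

lemma condRemaining_ageProfile_pair (hP : ∀ j, ValidProtocol (ageProtocol (P j))) {x y : Fin n}
    (hxy : x ≠ y) (hS : pendingSet h = {x, y}) :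
    condRemaining (ageProfile P) h x = 1 +
      ENNReal.ofReal ((1 - P x (h.length + 1)) * (1 - P y (h.length + 1))) *
        condRemaining (ageProfile P) (h ++ [transmit ∅]) x +
      ENNReal.ofReal ((1 - P x (h.length + 1)) * P y (h.length + 1)) *
        condRemaining (ageProfile P) (h ++ [transmit {y}]) x +
      ENNReal.ofReal (P x (h.length + 1) * P y (h.length + 1)) *
        condRemaining (ageProfile P) (h ++ [transmit {x, y}]) x := by
  have hx : pending h x := mem_pendingSet.1 (by simp [hS])
  rw [condRemaining_eq_sum_powerset hP, hS, sum_powerset_insert (by simpa using hxy),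
    sum_powerset_singleton, sum_powerset_singleton, prod_pair hxy]
  simp [hx, hxy, hxy.symm, condRemaining_append_transmit_singleton_self]
  ring

lemma condRemaining_ageProfile_lone (hP : ∀ j, ValidProtocol (ageProtocol (P j))) {x : Fin n}
    (hS : pendingSet h = {x}) :
    condRemaining (ageProfile P) h x = 1 + ENNReal.ofReal (1 - P x (h.length + 1)) *
      condRemaining (ageProfile P) (h ++ [transmit ∅]) x := by
  have hx : pending h x := mem_pendingSet.1 (by simp [hS])
  rw [condRemaining_eq_sum_powerset hP, hS, sum_powerset_singleton]
  simp [hx, condRemaining_append_transmit_singleton_self]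

end AgeProfile

section Reachability

variable {p : ℕ → ℝ} {h : Hist n}

lemma exists_reachable_wait (hp : ValidProtocol (ageProtocol p))
    (hpos : 0 < histProb (ageProfile fun _ => p) h) (hcard : 2 ≤ (pendingSet h).card) (d : ℕ) :
    ∃ h' : Hist n, h'.length = h.length + d ∧ 0 < histProb (ageProfile fun _ => p) h' ∧
      pendingSet h' = pendingSet h := by
  induction d with
  | zero => exact ⟨h, rfl, hpos, rfl⟩
  | succ d ih =>
    obtain ⟨h', hlen, hpos', hS⟩ := ih
    have hp' := (validProtocol_ageProtocol_iff.1 hp (h'.length + 1) (by omega))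
    -- everybody pending transmits when that has positive probability, nobody transmits otherwise
    by_cases hq : 0 < p (h'.length + 1)
    · refine ⟨h' ++ [transmit (pendingSet h')], by simp [hlen]; omega, ?_, ?_⟩
      · exact histProb_append_transmit_pos hpos' subset_rfl (fun _ _ => by simpa using hq)
          fun j hj hj' => absurd hj hj'
      · rw [pendingSet_append_transmit_of_card_ne_one _ (by rw [hS]; omega), hS]
    · refine ⟨h' ++ [transmit ∅], by simp [hlen]; omega, ?_, ?_⟩
      · exact histProb_append_transmit_pos hpos' (empty_subset _) (by simp)
          fun j _ _ => by simp; linarith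
      · rw [pendingSet_append_transmit_empty, hS]

lemma exists_reachable_univ (hp : ValidProtocol (ageProtocol p)) (hn : 2 ≤ n) (t : ℕ) :
    ∃ h : Hist n, h.length = t ∧ 0 < histProb (ageProfile fun _ => p) h ∧ pendingSet h = univ := by
  simpa [pendingSet_nil] using exists_reachable_wait hp (h := [])
    (by simp [histProb, contProb]) (by simpa [pendingSet_nil] using hn) t

end Reachability

section Equilibrium

variable {p : ℕ → ℝ} {h : Hist n}

lemma IsEquilibrium.ageProfile_pos (hp : ValidProtocol (ageProtocol p))
    (heq : IsEquilibrium (ageProfile fun _ : Fin n => p)) (hn : 2 ≤ n) (t : ℕ) : 0 < p (t + 1) := by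
  by_contra hq
  have hq0 : p (t + 1) = 0 :=
    le_antisymm (not_lt.1 hq) (validProtocol_ageProtocol_iff.1 hp (t + 1) (by omega)).1
  obtain ⟨h, rfl, hpos, hS⟩ := exists_reachable_univ hp hn t
  let x : Fin n := ⟨0, by omega⟩
  have hx : pending h x := mem_pendingSet.1 (by simp [hS])
  -- nobody transmits in the next slot, so a player who does transmits alone
  have hstay := condRemaining_eq_of_deterministic (h := h) (i := x) (fun _ => hp) (empty_subset _)
    fun j _ => by simp [hq0]
  have hdev : ValidProtocol (ageProtocol (Function.update p (h.length + 1) 1)) :=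
    hp.ageProtocol_update _ zero_le_one le_rfl
  have hgo := condRemaining_eq_of_deterministic (h := h) (i := x)
    (validProtocol_ageProfile_update hp hdev x) (s₀ := {x}) (by simp [hS])
    fun j _ => by by_cases hj : j = x <;> simp [hj, hq0]
  have hle := heq.condRemaining_le_update hpos hdev x
  rw [hstay, hgo, condRemaining_append_transmit_singleton_self, if_pos hx, add_zero] at hle
  have h1 := one_le_condRemaining (ageProfile fun _ => p) (h := h ++ [transmit ∅]) (i := x)
    (by simpa [← mem_pendingSet, pendingSet_append_transmit_empty] using hx)
  exact not_le.2 (ENNReal.lt_add_right ENNReal.one_ne_top (zero_lt_one.trans_le h1).ne') hle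

lemma exists_lt_one_of_condLatency_lt_top (hp : ValidProtocol (ageProtocol p)) (hn : 2 ≤ n)
    {i : Fin n} (hfin : condLatency (ageProfile fun _ => p) [] i < ⊤) (t : ℕ) :
    ∃ u, t < u ∧ p u < 1 := by
  by_contra! hone
  -- from time `t` on everybody transmits in every slot, so nobody ever succeeds
  have hgrow : ∀ k : ℕ, ∀ g : Hist n, t ≤ g.length → pendingSet g = univ →
      (k : ℝ≥0∞) ≤ condRemaining (ageProfile fun _ => p) g i := by
    intro k
    induction k with
    | zero => simp
    | succ k ih =>
      intro g hg hS
      have hpg : p (g.length + 1) = 1 :=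
        le_antisymm (validProtocol_ageProtocol_iff.1 hp _ (by omega)).2 (hone _ (by omega))
      rw [condRemaining_eq_of_deterministic (fun _ => hp) (s₀ := univ) (by simp [hS])
        fun j _ => by simp [hpg], if_pos (mem_pendingSet.1 (by simp [hS])), Nat.cast_succ,
        add_comm]
      exact add_le_add_right (ih _ (by simp; omega) (by
        rw [pendingSet_append_transmit_of_card_ne_one _ (by simp; omega), hS])) 1
  obtain ⟨h, hlen, hpos, hS⟩ := exists_reachable_univ hp hn t
  obtain ⟨k, hk⟩ := ENNReal.exists_nat_gt (condRemaining_lt_top (fun _ => hp) hpos hfin).ne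
  exact not_le.2 hk (hgrow k h hlen.ge hS)

lemma exists_reachable_pair (hp : ValidProtocol (ageProtocol p)) (hn : 2 ≤ n)
    (hpos : ∀ t, 0 < p (t + 1)) (hlt : ∀ t, ∃ u, t < u ∧ p u < 1) :
    ∃ x y : Fin n, ∃ h : Hist n, x ≠ y ∧ 0 < histProb (ageProfile fun _ => p) h ∧
      pendingSet h = {x, y} := by
  suffices ∀ k, ∀ h : Hist n, 0 < histProb (ageProfile fun _ => p) h →
      (pendingSet h).card = k + 2 →
      ∃ h' : Hist n, 0 < histProb (ageProfile fun _ => p) h' ∧ (pendingSet h').card = 2 by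
    obtain ⟨h, hh, hcard⟩ := this (n - 2) [] (by simp [histProb, contProb])
      (by simp [pendingSet_nil]; omega)
    obtain ⟨x, y, hxy, hS⟩ := card_eq_two.1 hcard
    exact ⟨x, y, h, hxy, hh, hS⟩
  intro k
  induction k with
  | zero => exact fun h hh hcard => ⟨h, hh, hcard⟩
  | succ k ih =>
    intro h hh hcard
    obtain ⟨u, hu, hu1⟩ := hlt h.length
    obtain ⟨g, hglen, hg, hgS⟩ := exists_reachable_wait hp hh (by omega) (u - 1 - h.length)
    have hgu : g.length + 1 = u := by omega
    obtain ⟨j, hj⟩ := card_pos.1 (show 0 < (pendingSet g).card by rw [hgS]; omega)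
    refine ih (g ++ [transmit {j}]) ?_ ?_
    · exact histProb_append_transmit_pos hg (by simpa using hj)
        (fun _ _ => by simpa [hgu] using hpos g.length) fun _ _ _ => by simpa [hgu] using hu1
    · rw [pendingSet_append_transmit_singleton, card_erase_of_mem hj, hgS]
      omega

lemma IsEquilibrium.lone_succeeds (hp : ValidProtocol (ageProtocol p))
    (heq : IsEquilibrium (ageProfile fun _ : Fin n => p)) {x : Fin n}
    (hpos : 0 < histProb (ageProfile fun _ => p) h) (hS : pendingSet h = {x}) :
    p (h.length + 1) = 1 ∧ condRemaining (ageProfile fun _ => p) h x = 1 := by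
  have hq := validProtocol_ageProtocol_iff.1 hp (h.length + 1) (by omega)
  have hdev : ValidProtocol (ageProtocol (Function.update p (h.length + 1) 1)) :=
    hp.ageProtocol_update _ zero_le_one le_rfl
  have hle := heq.condRemaining_le_update hpos hdev x
  rw [condRemaining_ageProfile_lone (validProtocol_ageProfile_update hp hdev x) hS,
    condRemaining_ageProfile_lone (fun _ => hp) hS] at hle
  simp only [Function.update_self, sub_self, ENNReal.ofReal_zero, zero_mul, add_zero] at hle
  have h1 := one_le_condRemaining (ageProfile fun _ => p) (h := h ++ [transmit ∅]) (i := x)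
    (by simp [← mem_pendingSet, pendingSet_append_transmit_empty, hS])
  have hzero : ENNReal.ofReal (1 - p (h.length + 1)) = 0 := by
    by_contra hne
    exact not_le.2 (ENNReal.lt_add_right ENNReal.one_ne_top
      (mul_ne_zero hne (zero_lt_one.trans_le h1).ne')) hle
  have hq1 : p (h.length + 1) = 1 := le_antisymm hq.2 (by simpa using hzero)
  refine ⟨hq1, ?_⟩
  rw [condRemaining_ageProfile_lone (fun _ => hp) hS, hzero, zero_mul, add_zero]

end Equilibrium

section Pair

variable {p : ℕ → ℝ} {x y : Fin n} {h : Hist n}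

def IsCriticalPair (p : ℕ → ℝ) (x y : Fin n) (h : Hist n) : Prop :=
  0 < histProb (ageProfile fun _ => p) h ∧ pendingSet h = {x, y} ∧ p (h.length + 1) < 1

lemma condRemaining_eq_one_add_of_collision (hp : ValidProtocol (ageProtocol p)) (hxy : x ≠ y)
    (hpos : 0 < histProb (ageProfile fun _ => p) h) (hS : pendingSet h = {x, y})
    (hq : p (h.length + 1) = 1) :
    0 < histProb (ageProfile fun _ => p) (h ++ [transmit {x, y}]) ∧
      condRemaining (ageProfile fun _ => p) h x =
        1 + condRemaining (ageProfile fun _ => p) (h ++ [transmit {x, y}]) x := by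
  refine ⟨histProb_append_transmit_pos hpos hS.ge (fun _ _ => by simp [hq])
    fun j hj hj' => absurd (hS ▸ hj) hj', ?_⟩
  rw [condRemaining_ageProfile_pair (fun _ => hp) hxy hS]
  simp [hq]

lemma exists_isCriticalPair_le (hp : ValidProtocol (ageProtocol p))
    (hlt : ∀ t, ∃ u, t < u ∧ p u < 1) (hxy : x ≠ y) {g : Hist n}
    (hg : 0 < histProb (ageProfile fun _ => p) g) (hgS : pendingSet g = {x, y}) :
    ∃ h, IsCriticalPair p x y h ∧
      condRemaining (ageProfile fun _ => p) h x ≤ condRemaining (ageProfile fun _ => p) g x := by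
  suffices ∀ d, ∀ g : Hist n, 0 < histProb (ageProfile fun _ => p) g → pendingSet g = {x, y} →
      p (g.length + 1 + d) < 1 → ∃ h, IsCriticalPair p x y h ∧
        condRemaining (ageProfile fun _ => p) h x ≤ condRemaining (ageProfile fun _ => p) g x by
    obtain ⟨u, hu, hu1⟩ := hlt g.length
    exact this (u - g.length - 1) g hg hgS
      (by rwa [show g.length + 1 + (u - g.length - 1) = u by omega])
  intro d
  induction d with
  | zero => exact fun g hg hgS hq => ⟨g, ⟨hg, hgS, hq⟩, le_rfl⟩
  | succ d ih =>
    intro g hg hgS hq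
    by_cases hg1 : p (g.length + 1) < 1
    · exact ⟨g, ⟨hg, hgS, hg1⟩, le_rfl⟩
    have hg1 : p (g.length + 1) = 1 :=
      le_antisymm (validProtocol_ageProtocol_iff.1 hp _ (by omega)).2 (not_lt.1 hg1)
    obtain ⟨hpos', hval⟩ := condRemaining_eq_one_add_of_collision hp hxy hg hgS hg1
    obtain ⟨h, hh, hle⟩ := ih _ hpos' (by rw [pendingSet_append_transmit_pair _ hxy, hgS])
      (by rwa [List.length_append, List.length_singleton, show g.length + 1 + 1 + d =
        g.length + 1 + (d + 1) by omega])
    exact ⟨h, hh, hle.trans (hval ▸ le_add_self)⟩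

lemma indifference_of_le_of_le {q C X : ℝ} (hq0 : 0 < q) (hq1 : q < 1)
    (hX : X = 1 + (1 - q) * (1 - q) * C + (1 - q) * q + q * q * C)
    (htransmit : X ≤ 1 + q * C) (hquiet : X ≤ 1 + (1 - q) * C + q) :
    X = 1 + q * C ∧ (2 * q - 1) * C = q := by
  -- `X` is the `q`, `1 - q` average of the two upper bounds, so both are equalities
  have h1 : 0 < 1 - q := by linarith
  constructor <;> nlinarith [mul_le_mul_of_nonneg_left htransmit hq0.le,
    mul_le_mul_of_nonneg_left hquiet h1.le]

lemma condRemaining_update_pair (hp : ValidProtocol (ageProtocol p)) (hxy : x ≠ y)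
    (hS : pendingSet h = {x, y}) {a : ℝ} (ha₀ : 0 ≤ a) (ha₁ : a ≤ 1) :
    condRemaining (ageProfile (Function.update (fun _ => p) x
      (Function.update p (h.length + 1) a))) h x = 1 +
      ENNReal.ofReal ((1 - a) * (1 - p (h.length + 1))) *
        condRemaining (ageProfile fun _ => p) (h ++ [transmit ∅]) x +
      ENNReal.ofReal ((1 - a) * p (h.length + 1)) *
        condRemaining (ageProfile fun _ => p) (h ++ [transmit {y}]) x +
      ENNReal.ofReal (a * p (h.length + 1)) *
        condRemaining (ageProfile fun _ => p) (h ++ [transmit {x, y}]) x := by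
  have hafter : ∀ v : Fin n → Bool, condRemaining (ageProfile (Function.update (fun _ => p) x
      (Function.update p (h.length + 1) a))) (h ++ [v]) x =
      condRemaining (ageProfile fun _ => p) (h ++ [v]) x := fun v =>
    condRemaining_ageProfile_congr rfl rfl (fun j t ht => by
      have : t ≠ h.length + 1 := by simp at ht; omega
      by_cases hj : j = x <;> simp [hj, this]) x
  rw [condRemaining_ageProfile_pair (validProtocol_ageProfile_update hp
    (hp.ageProtocol_update _ ha₀ ha₁) x) hxy hS, hafter, hafter, hafter]
  simp [hxy.symm]

lemma IsEquilibrium.critical_pair_eq (hp : ValidProtocol (ageProtocol p))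
    (heq : IsEquilibrium (ageProfile fun _ : Fin n => p))
    (hfin : condLatency (ageProfile fun _ => p) [] x < ⊤) (hxy : x ≠ y)
    (hcrit : IsCriticalPair p x y h) (hq0 : 0 < p (h.length + 1)) :
    0 < histProb (ageProfile fun _ => p) (h ++ [transmit ∅]) ∧ p (h.length + 2) = 1 ∧
      (condRemaining (ageProfile fun _ => p) h x).toReal = 1 + p (h.length + 1) *
        (condRemaining (ageProfile fun _ => p) (h ++ [transmit ∅]) x).toReal ∧
      (2 * p (h.length + 1) - 1) *
        (condRemaining (ageProfile fun _ => p) (h ++ [transmit ∅]) x).toReal =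
          p (h.length + 1) := by
  obtain ⟨hpos, hS, hq1⟩ := hcrit
  set q := p (h.length + 1)
  set V := condRemaining (ageProfile fun _ => p) (h ++ [transmit ∅]) x
  have hempty : 0 < histProb (ageProfile fun _ => p) (h ++ [transmit ∅]) :=
    histProb_append_transmit_pos hpos (empty_subset _) (by simp) fun _ _ _ => by simpa using hq1
  have hsolo : 0 < histProb (ageProfile fun _ => p) (h ++ [transmit {y}]) :=
    histProb_append_transmit_pos hpos (by simp [hS]) (fun _ _ => by simpa using hq0)
      fun _ _ _ => by simpa using hq1
  obtain ⟨hq2, hlone⟩ := heq.lone_succeeds hp hsolo (pendingSet_append_transmit_of_eq_pair hxy hS)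
  have hcoll : condRemaining (ageProfile fun _ => p) (h ++ [transmit {x, y}]) x = V :=
    condRemaining_ageProfile_congr (by simp) (by rw [pendingSet_append_transmit_pair _ hxy,
      pendingSet_append_transmit_empty]) (fun _ _ _ => rfl) x
  have hVfin : V ≠ ⊤ := (condRemaining_lt_top (fun _ => hp) hempty hfin).ne
  have hreal : ∀ a b c : ℝ, 0 ≤ a → 0 ≤ b → 0 ≤ c →
      1 + ENNReal.ofReal a * V + ENNReal.ofReal b * 1 + ENNReal.ofReal c * V =
        ENNReal.ofReal (1 + a * V.toReal + b + c * V.toReal) := by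
    intro a b c ha hb hc
    rw [← ENNReal.ofReal_toReal hVfin, ← ENNReal.ofReal_mul ha, ← ENNReal.ofReal_mul hc, mul_one,
      ← ENNReal.ofReal_one, ← ENNReal.ofReal_add zero_le_one (by positivity),
      ← ENNReal.ofReal_add (by positivity) hb, ← ENNReal.ofReal_add (by positivity) (by positivity),
      ENNReal.toReal_ofReal ENNReal.toReal_nonneg]
  have h1q : 0 ≤ 1 - q := by linarith
  have hX := condRemaining_ageProfile_pair (fun _ => hp) hxy hS (h := h) (P := fun _ => p)
  have htransmit := (heq.condRemaining_le_update hpos (hp.ageProtocol_update _ zero_le_one le_rfl)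
    x).trans_eq (condRemaining_update_pair hp hxy hS zero_le_one le_rfl)
  have hquiet := (heq.condRemaining_le_update hpos (hp.ageProtocol_update _ le_rfl zero_le_one)
    x).trans_eq (condRemaining_update_pair hp hxy hS le_rfl zero_le_one)
  rw [hlone, hcoll, hreal _ _ _ (by positivity) (by positivity) (by positivity)] at hX
  rw [hlone, hcoll, hreal _ _ _ (by simp) (by simp) (by positivity)] at htransmit
  rw [hlone, hcoll, hreal _ _ _ (by positivity) (by positivity) (by simp)] at hquiet
  refine ⟨hempty, by simpa using hq2, indifference_of_le_of_le hq0 hq1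
    (by rw [hX, ENNReal.toReal_ofReal (by positivity)]) ?_ ?_⟩
  · simpa using ENNReal.toReal_le_of_le_ofReal (by positivity) htransmit
  · simpa using ENNReal.toReal_le_of_le_ofReal (by positivity) hquiet

lemma IsEquilibrium.condRemaining_le_three (hp : ValidProtocol (ageProtocol p))
    (heq : IsEquilibrium (ageProfile fun _ : Fin n => p)) (hxy : x ≠ y)
    (hpos : 0 < histProb (ageProfile fun _ => p) h) (hS : pendingSet h = {x, y})
    (hq2 : p (h.length + 2) = 1) : condRemaining (ageProfile fun _ => p) h x ≤ 3 := by
  have hq := validProtocol_ageProtocol_iff.1 hp (h.length + 1) (by omega)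
  -- deviation: stay quiet in the next two slots, then transmit; `y` has left by then
  set p₃ := Function.update (Function.update (Function.update p (h.length + 1) 0)
    (h.length + 2) 0) (h.length + 3) 1
  have hp₃ : ValidProtocol (ageProtocol p₃) :=
    ((hp.ageProtocol_update _ le_rfl zero_le_one).ageProtocol_update _ le_rfl
      zero_le_one).ageProtocol_update _ zero_le_one le_rfl
  have hP₃ := validProtocol_ageProfile_update hp hp₃ x
  have hlast : ∀ g : Hist n, pendingSet g = {x} → g.length = h.length + 2 →
      condRemaining (ageProfile (Function.update (fun _ => p) x p₃)) g x = 1 := by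
    intro g hgS hglen
    rw [condRemaining_ageProfile_lone hP₃ hgS]
    simp [hglen, p₃]
  have hsolo : condRemaining (ageProfile (Function.update (fun _ => p) x p₃))
      (h ++ [transmit {y}]) x = 2 := by
    have hyS := pendingSet_append_transmit_of_eq_pair hxy hS
    rw [condRemaining_ageProfile_lone hP₃ hyS, hlast _ (by
      rw [pendingSet_append_transmit_empty, hyS]) (by simp)]
    simp [p₃]
    norm_num
  have hquiet : condRemaining (ageProfile (Function.update (fun _ => p) x p₃))
      (h ++ [transmit ∅]) x = 2 := by
    have hS₀ : pendingSet (h ++ [transmit ∅]) = {x, y} := by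
      rw [pendingSet_append_transmit_empty, hS]
    rw [condRemaining_ageProfile_pair hP₃ hxy hS₀, hlast _
      (pendingSet_append_transmit_of_eq_pair hxy hS₀) (by simp)]
    simp [p₃, hxy.symm, hq2]
    norm_num
  have hle := heq.condRemaining_le_update hpos hp₃ x
  rw [condRemaining_ageProfile_pair hP₃ hxy hS, hsolo, hquiet] at hle
  simp [p₃, hxy.symm] at hle
  refine hle.trans_eq ?_
  rw [add_assoc, ← add_mul, ← ENNReal.ofReal_add (by linarith) hq.1, sub_add_cancel,
    ENNReal.ofReal_one]
  norm_num

lemma sq_div_le_mul_of_le {L C q : ℝ} (hL : 0 ≤ L) (hC : 1 + L ≤ C)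
    (hq : (2 * q - 1) * C = q) : (1 + L) ^ 2 / (2 * L + 1) ≤ q * C := by
  -- `q * C = C ^ 2 / (2 * C - 1)`, which increases with `C ≥ 1`
  have hC₁ : 0 < 2 * C - 1 := by linarith
  have hmono : (2 * C - 1) * (1 + L) ^ 2 ≤ C ^ 2 * (2 * L + 1) := by
    have : 0 ≤ 2 * (1 + L) * C - C - (1 + L) := by
      nlinarith [mul_nonneg (sub_nonneg.2 hC) (by linarith : (0 : ℝ) ≤ 2 * (1 + L) - 1)]
    nlinarith [mul_nonneg (sub_nonneg.2 hC) this]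
  have hqC : (2 * C - 1) * (q * C * (2 * L + 1)) = C ^ 2 * (2 * L + 1) := by
    linear_combination C * (2 * L + 1) * hq
  rw [div_le_iff₀ (by linarith)]
  exact le_of_mul_le_mul_left (hmono.trans_eq hqC.symm) hC₁

lemma IsEquilibrium.critical_lower_bound (hp : ValidProtocol (ageProtocol p))
    (heq : IsEquilibrium (ageProfile fun _ : Fin n => p))
    (hfin : condLatency (ageProfile fun _ => p) [] x < ⊤) (hxy : x ≠ y)
    (hpos : ∀ t, 0 < p (t + 1)) (hlt : ∀ t, ∃ u, t < u ∧ p u < 1) {L : ℝ} (hL₀ : 0 ≤ L)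
    (hL : ∀ h', IsCriticalPair p x y h' → L ≤ (condRemaining (ageProfile fun _ => p) h' x).toReal)
    (hcrit : IsCriticalPair p x y h) :
    1 + (1 + L) ^ 2 / (2 * L + 1) ≤ (condRemaining (ageProfile fun _ => p) h x).toReal := by
  obtain ⟨hpos₀, hq2, hX, hqC⟩ := heq.critical_pair_eq hp hfin hxy hcrit (hpos _)
  have hS₀ : pendingSet (h ++ [transmit ∅]) = {x, y} := by
    rw [pendingSet_append_transmit_empty, hcrit.2.1]
  obtain ⟨hpos₁, hcoll⟩ :=
    condRemaining_eq_one_add_of_collision hp hxy hpos₀ hS₀ (by simpa using hq2)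
  obtain ⟨h', hh', hle⟩ := exists_isCriticalPair_le hp hlt hxy hpos₁
    (by rw [pendingSet_append_transmit_pair _ hxy, hS₀])
  have hfin₁ := (condRemaining_lt_top (fun _ => hp) hpos₁ hfin).ne
  have hC : 1 + L ≤ (condRemaining (ageProfile fun _ => p) (h ++ [transmit ∅]) x).toReal := by
    rw [hcoll, ENNReal.toReal_add ENNReal.one_ne_top hfin₁, ENNReal.toReal_one]
    linarith [(hL h' hh').trans (ENNReal.toReal_mono hfin₁ hle)]
  rw [hX]
  linarith [sq_div_le_mul_of_le hL₀ hC hqC]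

lemma lt_one_add_sq_div {L : ℝ} (h₀ : 0 ≤ L) (h₃ : L ≤ 3) : L < 1 + (1 + L) ^ 2 / (2 * L + 1) := by
  rw [← sub_lt_iff_lt_add', lt_div_iff₀ (by linarith)]
  nlinarith

end Pair

/-- For `n ≥ 2` players, there is no anonymous age-based
acknowledgment-based protocol that is in equilibrium and gives every player finite
expected latency. -/
theorem no_age_based_equilibrium_with_finite_latency :
    ∀ (n : ℕ) (p : ℕ → ℝ), 2 ≤ n →
      (∀ t : ℕ, 1 ≤ t → 0 ≤ p t ∧ p t ≤ 1) →
      (∀ i : Fin n, condLatency (fun _ : Fin n => ageProtocol p) [] i < ⊤) →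
      ¬ IsEquilibrium (fun _ : Fin n => ageProtocol p) := by
  intro n p hn hp hfin heq
  replace hp := validProtocol_ageProtocol_iff.2 hp
  have hpos := heq.ageProfile_pos hp hn
  have hlt := exists_lt_one_of_condLatency_lt_top hp hn (hfin ⟨0, by omega⟩)
  obtain ⟨x, y, g, hxy, hg, hgS⟩ := exists_reachable_pair hp hn hpos hlt
  obtain ⟨h₀, hh₀, -⟩ := exists_isCriticalPair_le hp hlt hxy hg hgS
  -- the infimum `L` of the values of critical states satisfies `1 + (1 + L)² / (2L + 1) ≤ L ≤ 3`
  set S : Set ℝ := {X | ∃ h, IsCriticalPair p x y h ∧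
    (condRemaining (ageProfile fun _ => p) h x).toReal = X}
  have hS₀ : (condRemaining (ageProfile fun _ => p) h₀ x).toReal ∈ S := ⟨h₀, hh₀, rfl⟩
  have hL₀ : 0 ≤ sInf S := le_csInf ⟨_, hS₀⟩ fun _ ⟨_, _, hX⟩ => hX ▸ ENNReal.toReal_nonneg
  have hbdd : BddBelow S := ⟨0, fun _ ⟨_, _, hX⟩ => hX ▸ ENNReal.toReal_nonneg⟩
  have h₀3 := heq.condRemaining_le_three hp hxy hh₀.1 hh₀.2.1
    (heq.critical_pair_eq hp (hfin x) hxy hh₀ (hpos _)).2.1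
  have hL₃ : sInf S ≤ 3 := (csInf_le hbdd hS₀).trans
    (ENNReal.toReal_le_of_le_ofReal (by norm_num) (by simpa using h₀3))
  have hL := le_csInf ⟨_, hS₀⟩ fun _ ⟨h, hh, hX⟩ => hX ▸ heq.critical_lower_bound hp (hfin x)
    hxy hpos hlt hL₀ (fun h' hh' => csInf_le hbdd ⟨h', hh', rfl⟩) hh
  exact (lt_one_add_sq_div hL₀ hL₃).not_ge hL

end Contention
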